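/- arXiv:2505.02614 — 2 statements merged into one kernel-verified Lean document; each statement's English description precedes it below -/
import Mathlib

section
/- (Convergence of entropic mirror descent with Polyak-type stepsizes) Let A ∈ ℝ^{m×n} with A ≠ 0 and b ∈ ℝ^m be such that S₊ is nonempty, and let f(x) = (1/2)‖Ax − b‖₂². Let x₀ ∈ ℝ^n_{++} and define recursively x_{k+1} = x_k ∘ exp(−α_k ∇f(x_k)) with α_k = min{ f(x_k)/‖∇f(x_k)‖²_{x_k} , 1.79/‖∇f(x_k)‖_∞ }, assuming ∇f(x_k) ≠ 0 for all k. Then (x_k) converges to some x* ∈ S₊, and for every k ∈ ℕ, min_{0≤i≤k} f(x_i) ≤ 4·R·(R + ‖x*‖₁)·C_A² / (k+1), where R = D_h(x*, x₀) and C_A = max_{1≤j≤n} ‖A_{:j}‖₂ is the maximum Euclidean column norm of A. -/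
/-!
For every `z ∈ S₊`, `D_h(z, x_k)` is a Lyapunov function. Since `exp u ≤ 1 + u + u²` for
`u ≤ 1.79`, the cap `1.79 / ‖∇f‖_∞` gives the three-point inequality
`D_h(z, x_{k+1}) ≤ D_h(z, x_k) - α_k ⟨∇f(x_k), x_k - z⟩ + α_k² ‖∇f(x_k)‖²_{x_k}`, and with
`⟨∇f(x), x - z⟩ = 2 f(x)` the Polyak branch of the stepsize turns this into a decrease by
`α_k f(x_k)`. The Hellinger bound `(√t - √z)² ≤ z log (z / t) - z + t` gives
`‖x_k‖₁ ≤ 2 (D_h(z, x₀) + ‖z‖₁)`, hence bounds on `∇f(x_k)` and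
`α_k ≥ 1 / (4 (D_h(z, x₀) + ‖z‖₁) C_A²)`; summing the decrease yields the rate and `f(x_k) → 0`.
A cluster point `x*` of the bounded iterates then lies in `S₊`, and as `D_h(x*, x_k)` is
nonincreasing and tends to `0` along a subsequence, the whole sequence converges to `x*`.
-/

open Finset Filter

/-- Bregman divergence generated by the negative entropy
`h(x) = ∑ i, x i * (log (x i) - 1)` (with the convention `0 * log 0 = 0`,
which holds automatically since `Real.log 0 = 0`). -/
noncomputable def Dh {n : ℕ} (x y : Fin n → ℝ) : ℝ :=
  ∑ i, (x i * Real.log (x i / y i) - x i + y i)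

/-- ℓ₁-norm of a vector. -/
noncomputable def l1 {n : ℕ} (x : Fin n → ℝ) : ℝ := ∑ i, |x i|

/-- Objective `f(x) = (1/2) ‖Ax - b‖₂²`. -/
noncomputable def fobj {m n : ℕ} (A : Matrix (Fin m) (Fin n) ℝ) (b : Fin m → ℝ)
    (x : Fin n → ℝ) : ℝ := (1 / 2) * ∑ j, ((A.mulVec x - b) j) ^ 2

/-- Gradient `∇f(x) = Aᵀ (Ax - b)` of `f(x) = (1/2)‖Ax - b‖₂²`. -/
noncomputable def gradf {m n : ℕ} (A : Matrix (Fin m) (Fin n) ℝ) (b : Fin m → ℝ)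
    (x : Fin n → ℝ) : Fin n → ℝ := A.transpose.mulVec (A.mulVec x - b)

/-- Maximum norm `‖v‖_∞`. -/
noncomputable def linfty {n : ℕ} [NeZero n] (v : Fin n → ℝ) : ℝ :=
  Finset.univ.sup' Finset.univ_nonempty fun i => |v i|

/-- Weighted squared norm `‖v‖²_x = ∑ i, x i * (v i)²`. -/
noncomputable def wnormSq {n : ℕ} (x v : Fin n → ℝ) : ℝ := ∑ i, x i * (v i) ^ 2

/-- The Polyak-type stepsize `min { f(x)/‖∇f(x)‖²_x , 1.79/‖∇f(x)‖_∞ }`. -/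
noncomputable def polyakStep {m n : ℕ} [NeZero n] (A : Matrix (Fin m) (Fin n) ℝ)
    (b : Fin m → ℝ) (x : Fin n → ℝ) : ℝ :=
  min (fobj A b x / wnormSq x (gradf A b x)) (1.79 / linfty (gradf A b x))

/-- Maximum Euclidean column norm `C_A = max_j ‖A_{:j}‖₂`. -/
noncomputable def colNormMax {m n : ℕ} [NeZero n] (A : Matrix (Fin m) (Fin n) ℝ) : ℝ :=
  Finset.univ.sup' Finset.univ_nonempty fun j => Real.sqrt (∑ i, (A i j) ^ 2)

open Real Topology Matrix

noncomputable def bregTerm (z t : ℝ) : ℝ := z * log (z / t) - z + t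

section Bregman

variable {z t : ℝ}

theorem Dh_eq_sum_bregTerm {n : ℕ} (x y : Fin n → ℝ) : Dh x y = ∑ i, bregTerm (x i) (y i) :=
  rfl

theorem bregTerm_self (z : ℝ) : bregTerm z z = 0 := by
  by_cases hz : z = 0 <;> simp [bregTerm, hz]

/-- The Hellinger lower bound, from `log y ≥ 1 - 1 / y` at `y = √z / √t`. -/
theorem sq_sqrt_sub_sqrt_le_bregTerm (hz : 0 ≤ z) (ht : 0 < t) :
    (√t - √z) ^ 2 ≤ bregTerm z t := by
  rcases hz.eq_or_lt with rfl | hz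
  · simp [bregTerm, sq_sqrt ht.le]
  obtain ⟨r, hr, rfl⟩ : ∃ r, 0 < r ∧ z = r ^ 2 := ⟨√z, sqrt_pos.2 hz, (sq_sqrt hz.le).symm⟩
  obtain ⟨s, hs, rfl⟩ : ∃ s, 0 < s ∧ t = s ^ 2 := ⟨√t, sqrt_pos.2 ht, (sq_sqrt ht.le).symm⟩
  have hlog : r * (r - s) ≤ r ^ 2 * log (r / s) := by
    have := one_sub_inv_le_log_of_pos (div_pos hr hs)
    rw [inv_div] at this
    calc r * (r - s) = r ^ 2 * (1 - s / r) := by field_simp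
      _ ≤ r ^ 2 * log (r / s) := mul_le_mul_of_nonneg_left this (sq_nonneg r)
  rw [bregTerm, sqrt_sq hr.le, sqrt_sq hs.le, ← div_pow, log_pow]
  push_cast
  nlinarith

theorem bregTerm_nonneg (hz : 0 ≤ z) (ht : 0 < t) : 0 ≤ bregTerm z t :=
  (sq_nonneg _).trans (sq_sqrt_sub_sqrt_le_bregTerm hz ht)

theorem le_two_mul_bregTerm_add (hz : 0 ≤ z) (ht : 0 < t) : t ≤ 2 * (bregTerm z t + z) := by
  nlinarith [sq_sqrt_sub_sqrt_le_bregTerm hz ht, sq_sqrt ht.le, sq_sqrt hz, sq_nonneg (√t - 2 * √z)]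

theorem continuousAt_bregTerm (hz : 0 ≤ z) : ContinuousAt (bregTerm z) z := by
  rcases hz.eq_or_lt with rfl | hz
  · have : bregTerm 0 = id := funext fun t => by simp [bregTerm]
    exact this ▸ continuousAt_id
  · unfold bregTerm
    fun_prop (disch := positivity)

theorem tendsto_of_tendsto_bregTerm {ι : Type*} {l : Filter ι} {t : ι → ℝ} (hz : 0 ≤ z)
    (ht : ∀ k, 0 < t k) (h : Tendsto (fun k => bregTerm z (t k)) l (𝓝 0)) :
    Tendsto t l (𝓝 z) := by
  have hsq : Tendsto (fun k => (√(t k) - √z) ^ 2) l (𝓝 0) :=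
    squeeze_zero (fun _ => sq_nonneg _) (fun k => sq_sqrt_sub_sqrt_le_bregTerm hz (ht k)) h
  have hsqrt : Tendsto (fun k => √(t k)) l (𝓝 √z) := by
    rw [tendsto_iff_norm_sub_tendsto_zero]
    simpa [sqrt_sq_eq_abs] using hsq.sqrt
  have := hsqrt.pow 2
  rwa [sq_sqrt hz, show (fun k => √(t k) ^ 2) = t from funext fun k => sq_sqrt (ht k).le] at this

end Bregman

section Dh

variable {n : ℕ} {z y : Fin n → ℝ}

theorem Dh_nonneg (hz : ∀ i, 0 ≤ z i) (hy : ∀ i, 0 < y i) : 0 ≤ Dh z y :=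
  sum_nonneg fun i _ => bregTerm_nonneg (hz i) (hy i)

theorem l1_le_two_mul_Dh_add (hz : ∀ i, 0 ≤ z i) (hy : ∀ i, 0 < y i) :
    l1 y ≤ 2 * (Dh z y + l1 z) := by
  rw [l1, l1, Dh_eq_sum_bregTerm, ← sum_add_distrib, mul_sum]
  refine sum_le_sum fun i _ => ?_
  rw [abs_of_pos (hy i), abs_of_nonneg (hz i)]
  exact le_two_mul_bregTerm_add (hz i) (hy i)

variable {ι : Type*} {l : Filter ι} {x : ι → Fin n → ℝ}

theorem tendsto_of_tendsto_Dh (hz : ∀ i, 0 ≤ z i) (hx : ∀ k i, 0 < x k i)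
    (h : Tendsto (fun k => Dh z (x k)) l (𝓝 0)) : Tendsto x l (𝓝 z) :=
  tendsto_pi_nhds.2 fun i => tendsto_of_tendsto_bregTerm (hz i) (fun k => hx k i) <|
    squeeze_zero (fun k => bregTerm_nonneg (hz i) (hx k i))
      (fun k => single_le_sum (fun j _ => bregTerm_nonneg (hz j) (hx k j)) (mem_univ i)) h

theorem tendsto_Dh_of_tendsto (hz : ∀ i, 0 ≤ z i) (h : Tendsto x l (𝓝 z)) :
    Tendsto (fun k => Dh z (x k)) l (𝓝 0) := by
  have := tendsto_finsetSum univ fun i _ =>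
    (continuousAt_bregTerm (hz i)).tendsto.comp (tendsto_pi_nhds.1 h i)
  simpa [Dh_eq_sum_bregTerm, bregTerm_self] using this

end Dh

def feasibleSet {m n : ℕ} (A : Matrix (Fin m) (Fin n) ℝ) (b : Fin m → ℝ) : Set (Fin n → ℝ) :=
  {z | (∀ i, 0 ≤ z i) ∧ A *ᵥ z = b}

section LeastSquares

variable {m n : ℕ} (A : Matrix (Fin m) (Fin n) ℝ) (b : Fin m → ℝ) {z : Fin n → ℝ}

theorem two_mul_fobj (v : Fin n → ℝ) : 2 * fobj A b v = (A *ᵥ v - b) ⬝ᵥ (A *ᵥ v - b) := by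
  simp only [fobj, dotProduct, sq]
  ring

theorem fobj_nonneg (v : Fin n → ℝ) : 0 ≤ fobj A b v := by
  unfold fobj
  positivity

theorem fobj_eq_zero_iff {v : Fin n → ℝ} : fobj A b v = 0 ↔ A *ᵥ v = b := by
  rw [fobj, mul_eq_zero, Fintype.sum_eq_zero_iff_of_nonneg fun _ => sq_nonneg _]
  simp [funext_iff, sub_eq_zero]

theorem fobj_pos_of_gradf_ne_zero {v : Fin n → ℝ} (h : gradf A b v ≠ 0) : 0 < fobj A b v :=
  (fobj_nonneg A b v).lt_of_ne' fun h0 => h <| by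
    rw [gradf, (fobj_eq_zero_iff A b).1 h0, sub_self, mulVec_zero]

theorem continuous_fobj : Continuous (fobj A b) := by
  unfold fobj
  fun_prop

theorem gradf_dotProduct_sub (hAz : A *ᵥ z = b) (v : Fin n → ℝ) :
    gradf A b v ⬝ᵥ (v - z) = 2 * fobj A b v := by
  rw [two_mul_fobj, gradf, mulVec_transpose, ← dotProduct_mulVec, mulVec_sub, hAz]

theorem gradf_eq_mulVec_sub (hAz : A *ᵥ z = b) (v : Fin n → ℝ) :
    gradf A b v = (Aᵀ * A) *ᵥ (v - z) := by
  rw [gradf, ← mulVec_mulVec, mulVec_sub A v z, hAz]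

theorem l1_sub_le (v w : Fin n → ℝ) : l1 (v - w) ≤ l1 v + l1 w := by
  rw [l1, l1, l1, ← sum_add_distrib]
  exact sum_le_sum fun i _ => abs_sub _ _

variable [NeZero n]

theorem sum_sq_le_colNormMax_sq (j : Fin n) : ∑ i, A i j ^ 2 ≤ colNormMax A ^ 2 := by
  have hj : √(∑ i, A i j ^ 2) ≤ colNormMax A :=
    le_sup' (fun j => √(∑ i, A i j ^ 2)) (mem_univ j)
  calc ∑ i, A i j ^ 2 = √(∑ i, A i j ^ 2) ^ 2 := (sq_sqrt (by positivity)).symm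
    _ ≤ colNormMax A ^ 2 := pow_le_pow_left₀ (sqrt_nonneg _) hj 2

theorem abs_transpose_mul_self_apply_le (j j' : Fin n) : |(Aᵀ * A) j j'| ≤ colNormMax A ^ 2 := by
  refine abs_le_of_sq_le_sq ?_ (sq_nonneg _)
  calc (Aᵀ * A) j j' ^ 2 = (∑ i, A i j * A i j') ^ 2 := by simp [mul_apply]
    _ ≤ (∑ i, A i j ^ 2) * ∑ i, A i j' ^ 2 := sum_mul_sq_le_sq_mul_sq _ _ _
    _ ≤ colNormMax A ^ 2 * colNormMax A ^ 2 :=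
      mul_le_mul (sum_sq_le_colNormMax_sq A j) (sum_sq_le_colNormMax_sq A j')
        (by positivity) (sq_nonneg _)
    _ = (colNormMax A ^ 2) ^ 2 := (sq _).symm

theorem sq_gradf_le (v : Fin n → ℝ) (i : Fin n) :
    gradf A b v i ^ 2 ≤ colNormMax A ^ 2 * (2 * fobj A b v) := by
  rw [two_mul_fobj, dotProduct, gradf, mulVec_transpose]
  calc (∑ j, (A *ᵥ v - b) j * A j i) ^ 2
      ≤ (∑ j, (A *ᵥ v - b) j ^ 2) * ∑ j, A j i ^ 2 := sum_mul_sq_le_sq_mul_sq _ _ _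
    _ ≤ colNormMax A ^ 2 * ∑ j, (A *ᵥ v - b) j * (A *ᵥ v - b) j := by
      simp only [← sq]
      rw [mul_comm]
      exact mul_le_mul_of_nonneg_right (sum_sq_le_colNormMax_sq A i) (by positivity)

theorem abs_gradf_le (hAz : A *ᵥ z = b) (v : Fin n → ℝ) (i : Fin n) :
    |gradf A b v i| ≤ colNormMax A ^ 2 * l1 (v - z) := by
  rw [gradf_eq_mulVec_sub A b hAz, mulVec, dotProduct, l1, mul_sum]
  refine (abs_sum_le_sum_abs _ _).trans (sum_le_sum fun j _ => ?_)
  rw [abs_mul]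
  exact mul_le_mul_of_nonneg_right (abs_transpose_mul_self_apply_le A i j) (abs_nonneg _)

end LeastSquares

section Stepsize

variable {m n : ℕ} (A : Matrix (Fin m) (Fin n) ℝ) (b : Fin m → ℝ) {v z : Fin n → ℝ}

theorem wnormSq_pos {g : Fin n → ℝ} (hv : ∀ i, 0 < v i) (hg : g ≠ 0) : 0 < wnormSq v g := by
  obtain ⟨i, hi⟩ := Function.ne_iff.1 hg
  exact sum_pos' (fun j _ => mul_nonneg (hv j).le (sq_nonneg _))
    ⟨i, mem_univ i, mul_pos (hv i) (pow_pos (abs_pos.2 hi) 2 |>.trans_eq (sq_abs _))⟩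

variable [NeZero n]

theorem abs_le_linfty (g : Fin n → ℝ) (i : Fin n) : |g i| ≤ linfty g :=
  le_sup' (fun i => |g i|) (mem_univ i)

theorem linfty_pos {g : Fin n → ℝ} (hg : g ≠ 0) : 0 < linfty g := by
  obtain ⟨i, hi⟩ := Function.ne_iff.1 hg
  exact (abs_pos.2 hi).trans_le (abs_le_linfty g i)

theorem wnormSq_gradf_le (hv : ∀ i, 0 ≤ v i) :
    wnormSq v (gradf A b v) ≤ 2 * colNormMax A ^ 2 * l1 v * fobj A b v := by
  calc wnormSq v (gradf A b v) ≤ ∑ i, v i * (colNormMax A ^ 2 * (2 * fobj A b v)) :=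
        sum_le_sum fun i _ => mul_le_mul_of_nonneg_left (sq_gradf_le A b v i) (hv i)
    _ = 2 * colNormMax A ^ 2 * l1 v * fobj A b v := by
      rw [← sum_mul, l1, sum_congr rfl fun i _ => abs_of_nonneg (hv i)]
      ring

variable (hv : ∀ i, 0 < v i) (hg : gradf A b v ≠ 0)
include hv hg

theorem polyakStep_pos : 0 < polyakStep A b v :=
  lt_min (div_pos (fobj_pos_of_gradf_ne_zero A b hg) (wnormSq_pos hv hg))
    (div_pos (by norm_num) (linfty_pos hg))

theorem polyakStep_mul_wnormSq_le : polyakStep A b v * wnormSq v (gradf A b v) ≤ fobj A b v :=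
  (le_div_iff₀ (wnormSq_pos hv hg)).1 (min_le_left _ _)

theorem polyakStep_mul_abs_gradf_le (i : Fin n) : polyakStep A b v * |gradf A b v i| ≤ 1.79 :=
  calc polyakStep A b v * |gradf A b v i| ≤ polyakStep A b v * linfty (gradf A b v) :=
        mul_le_mul_of_nonneg_left (abs_le_linfty _ i) (polyakStep_pos A b hv hg).le
    _ ≤ 1.79 := (le_div_iff₀ (linfty_pos hg)).1 (min_le_right _ _)

theorem one_le_mul_polyakStep {R : ℝ} (hz : z ∈ feasibleSet A b) (hR : Dh z v ≤ R) :
    1 ≤ 4 * (R + l1 z) * colNormMax A ^ 2 * polyakStep A b v := by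
  have hR0 : 0 ≤ R := (Dh_nonneg hz.1 hv).trans hR
  have hz0 : 0 ≤ l1 z := sum_nonneg fun i _ => abs_nonneg _
  have hv1 : l1 v ≤ 2 * (R + l1 z) := (l1_le_two_mul_Dh_add hz.1 hv).trans (by linarith)
  have hC : 0 ≤ colNormMax A ^ 2 * (R + l1 z) := by positivity
  rw [polyakStep, mul_min_of_nonneg _ _ (by positivity)]
  refine le_min ?_ ?_
  · rw [mul_div_assoc', one_le_div (wnormSq_pos hv hg)]
    calc wnormSq v (gradf A b v) ≤ 2 * colNormMax A ^ 2 * l1 v * fobj A b v :=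
          wnormSq_gradf_le A b fun i => (hv i).le
      _ ≤ 2 * colNormMax A ^ 2 * (2 * (R + l1 z)) * fobj A b v := by
          gcongr
          exact fobj_nonneg A b v
      _ = 4 * (R + l1 z) * colNormMax A ^ 2 * fobj A b v := by ring
  · rw [mul_div_assoc', one_le_div (linfty_pos hg)]
    calc linfty (gradf A b v) ≤ colNormMax A ^ 2 * l1 (v - z) :=
          sup'_le _ _ fun i _ => abs_gradf_le A b hz.2 v i
      _ ≤ colNormMax A ^ 2 * (l1 v + l1 z) := by gcongr; exact l1_sub_le v z
      _ ≤ 4 * (R + l1 z) * colNormMax A ^ 2 * 1.79 := by nlinarith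

end Stepsize

section Descent

theorem exp_le_one_add_add_sq_of_nonneg {u : ℝ} (h0 : 0 ≤ u) (hu : u ≤ 1.79) :
    exp u ≤ 1 + u + u ^ 2 := by
  obtain ⟨s, rfl⟩ : ∃ s, u = 2 * s := ⟨u / 2, by ring⟩
  have hs0 : 0 ≤ s := by linarith
  have hpow : ∀ k : ℕ, s ^ k ≤ 0.895 ^ k := fun k => pow_le_pow_left₀ hs0 (by linarith) k
  have hP : exp s ≤ 1 + s + s ^ 2 / 2 + s ^ 3 / 6 + s ^ 4 / 24 + s ^ 5 / 100 := by
    have := exp_bound' hs0 (by linarith) (n := 5) (by norm_num)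
    norm_num [Finset.sum_range_succ, Nat.factorial] at this
    linarith
  -- `1 + 2s + 4s²` minus the square of the bound in `hP` is `s²` times this polynomial,
  -- which is decreasing and positive at `s = 0.895`.
  have hE : 0 ≤ 2 - 4/3 * s - 2/3 * s ^ 2 - 27/100 * s ^ 3 - 161/1800 * s ^ 4
      - 43/1800 * s ^ 5 - 73/14400 * s ^ 6 - 1/1200 * s ^ 7 - 1/10000 * s ^ 8 := by
    have := hpow 1; have := hpow 2; have := hpow 3; have := hpow 4
    have := hpow 5; have := hpow 6; have := hpow 7; have := hpow 8
    norm_num at *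
    linarith
  calc exp (2 * s) = exp s * exp s := by rw [← exp_add, two_mul]
    _ ≤ (1 + s + s ^ 2 / 2 + s ^ 3 / 6 + s ^ 4 / 24 + s ^ 5 / 100) ^ 2 := by
      rw [sq]
      exact mul_le_mul hP hP (exp_pos s).le (by positivity)
    _ ≤ 1 + 2 * s + (2 * s) ^ 2 := by nlinarith [mul_nonneg (sq_nonneg s) hE]

theorem exp_le_one_add_add_sq {u : ℝ} (hu : u ≤ 1.79) : exp u ≤ 1 + u + u ^ 2 := by
  rcases le_or_gt u (-1) with h | h
  · nlinarith [exp_le_one_iff.2 (h.trans (by norm_num) : u ≤ 0)]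
  rcases le_or_gt u 1 with h' | h'
  · have := abs_exp_sub_one_sub_id_le (abs_le.2 ⟨h.le, h'⟩)
    linarith [le_abs_self (exp u - 1 - u)]
  · exact exp_le_one_add_add_sq_of_nonneg (by linarith) hu

theorem bregTerm_mul_exp {t : ℝ} (ht : 0 < t) (z u : ℝ) :
    bregTerm z (t * exp u) = bregTerm z t - z * u + t * (exp u - 1) := by
  rcases eq_or_ne z 0 with rfl | hz
  · simp [bregTerm]
    ring
  · rw [bregTerm, bregTerm, log_div hz (by positivity), log_mul ht.ne' (exp_pos u).ne', log_exp,
      log_div hz ht.ne']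
    ring

theorem bregTerm_mul_exp_le {z t u : ℝ} (ht : 0 < t) (hu : u ≤ 1.79) :
    bregTerm z (t * exp u) ≤ bregTerm z t + (t - z) * u + t * u ^ 2 := by
  rw [bregTerm_mul_exp ht]
  nlinarith [mul_le_mul_of_nonneg_left (exp_le_one_add_add_sq hu) ht.le]

theorem Dh_mul_exp_le {n : ℕ} {v g : Fin n → ℝ} {α : ℝ} (hv : ∀ i, 0 < v i)
    (hαg : ∀ i, -α * g i ≤ 1.79) (z : Fin n → ℝ) :
    Dh z (fun i => v i * exp (-α * g i)) ≤ Dh z v - α * (g ⬝ᵥ (v - z)) + α ^ 2 * wnormSq v g := by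
  rw [Dh_eq_sum_bregTerm, Dh_eq_sum_bregTerm, dotProduct, wnormSq, mul_sum, mul_sum,
    ← sum_sub_distrib, ← sum_add_distrib]
  refine sum_le_sum fun i _ => (bregTerm_mul_exp_le (hv i) (hαg i)).trans_eq ?_
  simp only [Pi.sub_apply]
  ring

end Descent

noncomputable def entropicStep {m n : ℕ} [NeZero n] (A : Matrix (Fin m) (Fin n) ℝ) (b : Fin m → ℝ)
    (v : Fin n → ℝ) : Fin n → ℝ :=
  fun i => v i * exp (-(polyakStep A b v) * gradf A b v i)

theorem Dh_entropicStep_le {m n : ℕ} [NeZero n] (A : Matrix (Fin m) (Fin n) ℝ) (b : Fin m → ℝ)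
    {v z : Fin n → ℝ} (hv : ∀ i, 0 < v i) (hg : gradf A b v ≠ 0) (hAz : A *ᵥ z = b) :
    Dh z (entropicStep A b v) ≤ Dh z v - polyakStep A b v * fobj A b v := by
  have hα := polyakStep_pos A b hv hg
  have hαg (i : Fin n) : -polyakStep A b v * gradf A b v i ≤ 1.79 := by
    have := polyakStep_mul_abs_gradf_le A b hv hg i
    nlinarith [neg_abs_le (gradf A b v i)]
  have hw := polyakStep_mul_wnormSq_le A b hv hg
  calc Dh z (entropicStep A b v)
      ≤ Dh z v - polyakStep A b v * (2 * fobj A b v)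
        + polyakStep A b v * (polyakStep A b v * wnormSq v (gradf A b v)) := by
        rw [← gradf_dotProduct_sub A b hAz v, ← mul_assoc, ← sq]
        exact Dh_mul_exp_le hv hαg z
    _ ≤ Dh z v - polyakStep A b v * fobj A b v := by nlinarith

structure IsEntropicMirrorDescent {m n : ℕ} [NeZero n] (A : Matrix (Fin m) (Fin n) ℝ)
    (b : Fin m → ℝ) (x : ℕ → Fin n → ℝ) : Prop where
  pos_zero : ∀ i, 0 < x 0 i
  gradf_ne_zero : ∀ k, gradf A b (x k) ≠ 0
  succ : ∀ k, x (k + 1) = entropicStep A b (x k)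

namespace IsEntropicMirrorDescent

variable {m n : ℕ} [NeZero n] {A : Matrix (Fin m) (Fin n) ℝ} {b : Fin m → ℝ}
  {x : ℕ → Fin n → ℝ} {z : Fin n → ℝ}

theorem pos (hx : IsEntropicMirrorDescent A b x) : ∀ k i, 0 < x k i
  | 0 => hx.pos_zero
  | k + 1 => fun i => by
    rw [hx.succ, entropicStep]
    exact mul_pos (hx.pos k i) (exp_pos _)

theorem Dh_succ_le (hx : IsEntropicMirrorDescent A b x) (hAz : A *ᵥ z = b) (k : ℕ) :
    Dh z (x (k + 1)) ≤ Dh z (x k) - polyakStep A b (x k) * fobj A b (x k) := by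
  rw [hx.succ]
  exact Dh_entropicStep_le A b (hx.pos k) (hx.gradf_ne_zero k) hAz

theorem antitone_Dh (hx : IsEntropicMirrorDescent A b x) (hAz : A *ᵥ z = b) :
    Antitone fun k => Dh z (x k) :=
  antitone_nat_of_succ_le fun k => (hx.Dh_succ_le hAz k).trans <| sub_le_self _ <|
    mul_nonneg (polyakStep_pos A b (hx.pos k) (hx.gradf_ne_zero k)).le (fobj_nonneg A b _)

theorem sum_polyakStep_mul_fobj_le (hx : IsEntropicMirrorDescent A b x)
    (hz : z ∈ feasibleSet A b) (K : ℕ) :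
    ∑ k ∈ range K, polyakStep A b (x k) * fobj A b (x k) ≤ Dh z (x 0) := by
  suffices ∑ k ∈ range K, polyakStep A b (x k) * fobj A b (x k) ≤ Dh z (x 0) - Dh z (x K) by
    linarith [Dh_nonneg hz.1 (hx.pos K)]
  induction K with
  | zero => simp
  | succ K ih =>
    rw [sum_range_succ]
    linarith [hx.Dh_succ_le hz.2 K]

theorem fobj_le_mul_polyakStep_mul_fobj (hx : IsEntropicMirrorDescent A b x)
    (hz : z ∈ feasibleSet A b) (k : ℕ) :
    fobj A b (x k) ≤
      4 * (Dh z (x 0) + l1 z) * colNormMax A ^ 2 * (polyakStep A b (x k) * fobj A b (x k)) := by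
  have := one_le_mul_polyakStep A b (hx.pos k) (hx.gradf_ne_zero k) hz
    (hx.antitone_Dh hz.2 (Nat.zero_le k))
  nlinarith [fobj_nonneg A b (x k)]

theorem sum_fobj_le (hx : IsEntropicMirrorDescent A b x) (hz : z ∈ feasibleSet A b) (K : ℕ) :
    ∑ k ∈ range K, fobj A b (x k) ≤
      4 * (Dh z (x 0) + l1 z) * colNormMax A ^ 2 * Dh z (x 0) := by
  have hQ : 0 ≤ 4 * (Dh z (x 0) + l1 z) * colNormMax A ^ 2 := by
    have := Dh_nonneg hz.1 hx.pos_zero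
    have : 0 ≤ l1 z := sum_nonneg fun i _ => abs_nonneg _
    positivity
  calc ∑ k ∈ range K, fobj A b (x k)
      ≤ ∑ k ∈ range K,
          4 * (Dh z (x 0) + l1 z) * colNormMax A ^ 2 * (polyakStep A b (x k) * fobj A b (x k)) :=
        sum_le_sum fun k _ => hx.fobj_le_mul_polyakStep_mul_fobj hz k
    _ ≤ _ := by
      rw [← mul_sum]
      exact mul_le_mul_of_nonneg_left (hx.sum_polyakStep_mul_fobj_le hz K) hQ

theorem inf'_fobj_le (hx : IsEntropicMirrorDescent A b x) (hz : z ∈ feasibleSet A b) (k : ℕ) :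
    (range (k + 1)).inf' nonempty_range_add_one (fun i => fobj A b (x i)) ≤
      4 * Dh z (x 0) * (Dh z (x 0) + l1 z) * colNormMax A ^ 2 / (k + 1) := by
  rw [le_div_iff₀ (by positivity), mul_comm]
  calc ((k : ℝ) + 1) * (range (k + 1)).inf' nonempty_range_add_one (fun i => fobj A b (x i))
      = ∑ _i ∈ range (k + 1), (range (k + 1)).inf' nonempty_range_add_one
          (fun i => fobj A b (x i)) := by simp
    _ ≤ ∑ i ∈ range (k + 1), fobj A b (x i) := sum_le_sum fun i hi => inf'_le _ hi
    _ ≤ _ := (hx.sum_fobj_le hz (k + 1)).trans_eq (by ring)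

theorem tendsto_fobj (hx : IsEntropicMirrorDescent A b x) (hz : z ∈ feasibleSet A b) :
    Tendsto (fun k => fobj A b (x k)) atTop (𝓝 0) :=
  (summable_of_sum_range_le (fun k => fobj_nonneg A b (x k))
    (hx.sum_fobj_le hz)).tendsto_atTop_zero

theorem mem_Icc (hx : IsEntropicMirrorDescent A b x) (hz : z ∈ feasibleSet A b) (k : ℕ) :
    x k ∈ Set.Icc 0 fun _ => 2 * (Dh z (x 0) + l1 z) := by
  refine ⟨fun i => (hx.pos k i).le, fun i => ?_⟩
  calc x k i = |x k i| := (abs_of_pos (hx.pos k i)).symm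
    _ ≤ l1 (x k) := single_le_sum (fun j _ => abs_nonneg (x k j)) (mem_univ i)
    _ ≤ 2 * (Dh z (x k) + l1 z) := l1_le_two_mul_Dh_add hz.1 (hx.pos k)
    _ ≤ 2 * (Dh z (x 0) + l1 z) := by linarith [hx.antitone_Dh hz.2 (Nat.zero_le k)]

theorem exists_mem_feasibleSet_subseq_tendsto (hx : IsEntropicMirrorDescent A b x)
    (hz : z ∈ feasibleSet A b) :
    ∃ xbar ∈ feasibleSet A b, ∃ φ : ℕ → ℕ, StrictMono φ ∧ Tendsto (x ∘ φ) atTop (𝓝 xbar) := by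
  obtain ⟨xbar, hxbar, φ, hφ, hlim⟩ := isCompact_Icc.tendsto_subseq (hx.mem_Icc hz)
  have hf : fobj A b xbar = 0 :=
    tendsto_nhds_unique ((continuous_fobj A b).continuousAt.tendsto.comp hlim)
      ((hx.tendsto_fobj hz).comp hφ.tendsto_atTop)
  exact ⟨xbar, ⟨hxbar.1, (fobj_eq_zero_iff A b).1 hf⟩, φ, hφ, hlim⟩

theorem tendsto_of_subseq_tendsto (hx : IsEntropicMirrorDescent A b x)
    (hz : z ∈ feasibleSet A b) {φ : ℕ → ℕ} (hφ : StrictMono φ)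
    (hlim : Tendsto (x ∘ φ) atTop (𝓝 z)) : Tendsto x atTop (𝓝 z) :=
  tendsto_of_tendsto_Dh hz.1 hx.pos <|
    (tendsto_iff_tendsto_subseq_of_antitone (hx.antitone_Dh hz.2) hφ.tendsto_atTop).2 <|
      tendsto_Dh_of_tendsto hz.1 hlim

end IsEntropicMirrorDescent

theorem mirror_descent_convergence_general {m n : ℕ} [NeZero n]
    (A : Matrix (Fin m) (Fin n) ℝ) (b : Fin m → ℝ)
    (hS : ∃ z : Fin n → ℝ, (∀ i, 0 ≤ z i) ∧ A.mulVec z = b)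
    (x : ℕ → Fin n → ℝ) (hx0 : ∀ i, 0 < x 0 i)
    (hgrad : ∀ k, gradf A b (x k) ≠ 0)
    (hrec : ∀ k i, x (k + 1) i =
      x k i * Real.exp (-(polyakStep A b (x k)) * gradf A b (x k) i)) :
    ∃ xstar : Fin n → ℝ, (∀ i, 0 ≤ xstar i) ∧ A.mulVec xstar = b ∧
      Filter.Tendsto x Filter.atTop (nhds xstar) ∧
      ∀ k : ℕ, (Finset.range (k + 1)).inf' Finset.nonempty_range_add_one
          (fun i => fobj A b (x i)) ≤
        4 * Dh xstar (x 0) * (Dh xstar (x 0) + l1 xstar) * (colNormMax A) ^ 2 / (k + 1) := by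
  have hx : IsEntropicMirrorDescent A b x := ⟨hx0, hgrad, fun k => funext (hrec k)⟩
  obtain ⟨z, hz⟩ := hS
  obtain ⟨xstar, hxstar, φ, hφ, hlim⟩ := hx.exists_mem_feasibleSet_subseq_tendsto hz
  exact ⟨xstar, hxstar.1, hxstar.2, hx.tendsto_of_subseq_tendsto hxstar hφ hlim,
    hx.inf'_fobj_le hxstar⟩

/-- Convergence of entropic mirror descent with Polyak-type stepsizes:
if `S₊ ≠ ∅`, `x₀ ∈ ℝⁿ₊₊` and `x_{k+1} = x_k ∘ exp(-α_k ∇f(x_k))` with the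
Polyak-type stepsize `α_k`, then `(x_k)` converges to some `x* ∈ S₊` and
`min_{0 ≤ i ≤ k} f(x_i) ≤ 4 R (R + ‖x*‖₁) C_A² / (k+1)` where `R = D_h(x*, x₀)`. -/
theorem mirror_descent_convergence {m n : ℕ} [NeZero n]
    (A : Matrix (Fin m) (Fin n) ℝ) (hA : A ≠ 0) (b : Fin m → ℝ)
    (hS : ∃ z : Fin n → ℝ, (∀ i, 0 ≤ z i) ∧ A.mulVec z = b)
    (x : ℕ → Fin n → ℝ) (hx0 : ∀ i, 0 < x 0 i)
    (hgrad : ∀ k, gradf A b (x k) ≠ 0)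
    (hrec : ∀ k i, x (k + 1) i =
      x k i * Real.exp (-(polyakStep A b (x k)) * gradf A b (x k) i)) :
    ∃ xstar : Fin n → ℝ, (∀ i, 0 ≤ xstar i) ∧ A.mulVec xstar = b ∧
      Filter.Tendsto x Filter.atTop (nhds xstar) ∧
      ∀ k : ℕ, (Finset.range (k + 1)).inf' Finset.nonempty_range_add_one
          (fun i => fobj A b (x i)) ≤
        4 * Dh xstar (x 0) * (Dh xstar (x 0) + l1 xstar) * (colNormMax A) ^ 2 / (k + 1) :=
  mirror_descent_convergence_general A b hS x hx0 hgrad hrec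
end

section
/- (Exact ℓ₁-gap formula for the Bregman projection) Let A ∈ ℝ^{m×n}, b ∈ ℝ^m, η ∈ ℝ, and x₀ = e^{−η}·1 ∈ ℝ^n. Let x ∈ ℝ^n_{++} ∩ S₊ satisfy ⟨log x + η·1, z′ − x⟩ = 0 for all z′ ∈ S₊, and suppose ‖x‖₁ > ‖x₀‖₁ = n·e^{−η}. Then for every z ∈ S₊ with z ≠ 0, writing x̃ = x/‖x‖₁ and z̃ = z/‖z‖₁, one has ‖x‖₁ − ‖z‖₁ = ‖z‖₁ · ( ⟨log x̃, z̃⟩ − ⟨log x̃, x̃⟩ ) / ( η + log ‖x‖₁ + ⟨log x̃, x̃⟩ ). -/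
open Finset Filter

/-! The optimality condition makes `K = ⟨log x + η 𝟏, z⟩` the same for every feasible `z`,
and both inner products in the formula are affine in `K`: `⟨log x̃, z̃⟩ = K/‖z‖₁ - η - log ‖x‖₁`,
so the denominator is `K/‖x‖₁` and the identity reduces to algebra. The only analytic input is
that `K ≠ 0`: the entropy bound `⟨log x̃, x̃⟩ ≥ -log n` together with `‖x‖₁ > n e^{-η}` gives
`K/‖x‖₁ > 0`. -/

open Real

theorem l1_eq_sum_of_nonneg {n : ℕ} {x : Fin n → ℝ} (hx : ∀ i, 0 ≤ x i) :
    l1 x = ∑ i, x i :=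
  sum_congr rfl fun i _ => abs_of_nonneg (hx i)

theorem l1_pos {n : ℕ} {x : Fin n → ℝ} (hx : x ≠ 0) : 0 < l1 x := by
  obtain ⟨i, hi⟩ := Function.ne_iff.mp hx
  exact sum_pos' (fun j _ => abs_nonneg (x j)) ⟨i, mem_univ i, abs_pos.mpr hi⟩

section

variable {ι : Type*} [Fintype ι]

/-- Jensen's inequality for the convex function `t ↦ t log t` with uniform weights. -/
theorem neg_log_card_le_sum_log_mul {p : ι → ℝ} (hp : ∀ i, 0 ≤ p i) (hsum : ∑ i, p i = 1) :
    -log (Fintype.card ι) ≤ ∑ i, log (p i) * p i := by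
  have : Nonempty ι := by
    by_contra h
    simp [not_nonempty_iff.mp h] at hsum
  have hcard : (0 : ℝ) < Fintype.card ι := by exact_mod_cast Fintype.card_pos
  have jensen := convexOn_mul_log.map_sum_le (t := univ) (w := fun _ => (Fintype.card ι : ℝ)⁻¹)
    (p := p) (fun _ _ => by positivity) (by simp [hcard.ne']) (fun i _ => Set.mem_Ici.mpr (hp i))
  simp only [smul_eq_mul, ← mul_sum, hsum, mul_one, log_inv] at jensen
  simp only [mul_comm (log _)]
  nlinarith [inv_pos.mpr hcard, mul_inv_cancel₀ hcard.ne']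

theorem sum_log_div_mul_div {x w : ι → ℝ} {c W : ℝ} (hx : ∀ i, x i ≠ 0) (hc : c ≠ 0)
    (hW : ∑ i, w i = W) (hW0 : W ≠ 0) (η : ℝ) :
    ∑ i, log (x i / c) * (w i / W) = (∑ i, (log (x i) + η) * w i) / W - η - log c := by
  have hterm : ∀ i, log (x i / c) * (w i / W) =
      ((log (x i) + η) * w i - (η + log c) * w i) / W := fun i => by
    rw [log_div (hx i) hc]
    ring
  simp only [hterm, ← sum_div, sum_sub_distrib, ← mul_sum, hW]
  field_simp
  ring

end

theorem l1_gap_formula_general {m n : ℕ}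
    (A : Matrix (Fin m) (Fin n) ℝ) (b : Fin m → ℝ) (η : ℝ)
    (x : Fin n → ℝ) (hx : ∀ i, 0 < x i)
    (horth : ∀ z' : Fin n → ℝ, (∀ i, 0 ≤ z' i) → A.mulVec z' = b →
      ∑ i, (Real.log (x i) + η) * (z' i - x i) = 0)
    (hbig : l1 x > n * Real.exp (-η)) :
    ∀ z : Fin n → ℝ, (∀ i, 0 ≤ z i) → A.mulVec z = b → z ≠ 0 →
      l1 x - l1 z = l1 z *
        ((∑ i, Real.log (x i / l1 x) * (z i / l1 z)) -
          ∑ i, Real.log (x i / l1 x) * (x i / l1 x)) /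
        (η + Real.log (l1 x) + ∑ i, Real.log (x i / l1 x) * (x i / l1 x)) := by
  intro z hz hzsol hz0
  have hn : 0 < n := Nat.pos_of_ne_zero (by rintro rfl; simp [l1] at hbig)
  have hL : 0 < l1 x := lt_of_le_of_lt (by positivity) hbig
  have hZ : 0 < l1 z := l1_pos hz0
  have hxne : ∀ i, x i ≠ 0 := fun i => (hx i).ne'
  have hxL : ∑ i, x i = l1 x := (l1_eq_sum_of_nonneg fun i => (hx i).le).symm
  have hS := sum_log_div_mul_div hxne hL.ne' hxL hL.ne' η
  have hT := sum_log_div_mul_div hxne hL.ne' (l1_eq_sum_of_nonneg hz).symm hZ.ne' η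
  have hzx : ∑ i, (log (x i) + η) * z i = ∑ i, (log (x i) + η) * x i := by
    have := horth z hz hzsol
    simp only [mul_sub, sum_sub_distrib] at this
    linarith
  have hentropy : -log n ≤ ∑ i, log (x i / l1 x) * (x i / l1 x) := by
    simpa using neg_log_card_le_sum_log_mul (p := fun i => x i / l1 x)
      (fun i => (div_pos (hx i) hL).le) (by rw [← sum_div, hxL, div_self hL.ne'])
  have hlogL : log n - η < log (l1 x) := by
    rwa [lt_log_iff_exp_lt hL, exp_sub, exp_log (by exact_mod_cast hn), div_eq_mul_inv,
      ← exp_neg]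
  rw [hS] at hentropy ⊢
  rw [hT, hzx]
  generalize ∑ i, (log (x i) + η) * x i = K at hentropy ⊢
  have hK : K ≠ 0 := ((div_pos_iff_of_pos_right hL).mp (by linarith)).ne'
  rw [show η + log (l1 x) + (K / l1 x - η - log (l1 x)) = K / l1 x by ring]
  field_simp
  ring

/-- Exact ℓ₁-gap formula for the Bregman projection: let `x₀ = e^{-η} 𝟏`,
let `x ∈ ℝⁿ₊₊ ∩ S₊` satisfy `⟨log x + η 𝟏, z' - x⟩ = 0` for all `z' ∈ S₊`,
and suppose `‖x‖₁ > ‖x₀‖₁ = n e^{-η}`. Then for every `z ∈ S₊` with `z ≠ 0`,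
writing `x̃ = x/‖x‖₁` and `z̃ = z/‖z‖₁`,
`‖x‖₁ - ‖z‖₁ = ‖z‖₁ (⟨log x̃, z̃⟩ - ⟨log x̃, x̃⟩)/(η + log ‖x‖₁ + ⟨log x̃, x̃⟩)`. -/
theorem l1_gap_formula {m n : ℕ}
    (A : Matrix (Fin m) (Fin n) ℝ) (b : Fin m → ℝ) (η : ℝ)
    (x : Fin n → ℝ) (hx : ∀ i, 0 < x i) (hxsol : A.mulVec x = b)
    (horth : ∀ z' : Fin n → ℝ, (∀ i, 0 ≤ z' i) → A.mulVec z' = b →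
      ∑ i, (Real.log (x i) + η) * (z' i - x i) = 0)
    (hbig : l1 x > n * Real.exp (-η)) :
    ∀ z : Fin n → ℝ, (∀ i, 0 ≤ z i) → A.mulVec z = b → z ≠ 0 →
      l1 x - l1 z = l1 z *
        ((∑ i, Real.log (x i / l1 x) * (z i / l1 z)) -
          ∑ i, Real.log (x i / l1 x) * (x i / l1 x)) /
        (η + Real.log (l1 x) + ∑ i, Real.log (x i / l1 x) * (x i / l1 x)) :=
  l1_gap_formula_general A b η x hx horth hbig
end
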